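/- arXiv:1211.6334 — 4 statements merged into one kernel-verified Lean document; each statement's English description precedes it below -/
import Mathlib

section
/- Let A be an n×n real matrix and let ∼ be an equivalence relation on Fin n with the associated polydiagonal Δ = {x ∈ R^n : i ∼ j → x_i = x_j}. Then A maps Δ into Δ if and only if for every pair i ∼ i' and every equivalence class C of ∼, the row sums over C agree: ∑_{j ∈ C} A(i,j) = ∑_{j ∈ C} A(i',j). -/
theorem stmt3 (n : ℕ) (A : Matrix (Fin n) (Fin n) ℝ)
    (r : Fin n → Fin n → Prop) [DecidableRel r] (hr : Equivalence r) :
    (∀ x : Fin n → ℝ, (∀ i j, r i j → x i = x j) →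
      ∀ i j, r i j → A.mulVec x i = A.mulVec x j) ↔
    (∀ i i', r i i' → ∀ c : Fin n,
      ∑ j, (if r c j then A i j else 0) = ∑ j, (if r c j then A i' j else 0)) := by
  constructor
  · intro h i i' hii c
    have hx : ∀ a b, r a b → (if r c a then (1:ℝ) else 0) = (if r c b then (1:ℝ) else 0) := by
      intro a b hab
      by_cases hca : r c a
      · rw [if_pos hca, if_pos (hr.trans hca hab)]
      · rw [if_neg hca, if_neg (fun hcb => hca (hr.trans hcb (hr.symm hab)))]
    have := h (fun j => if r c j then (1:ℝ) else 0) hx i i' hii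
    simpa [Matrix.mulVec, dotProduct, mul_ite] using this
  · intro h x hx i i' hii
    letI s : Setoid (Fin n) := ⟨r, hr⟩
    haveI : DecidableEq (Quotient s) := fun a b =>
      Quotient.recOnSubsingleton₂ a b fun x y => decidable_of_iff (r x y) ⟨fun h => Quotient.sound (h : x ≈ y), fun h => Quotient.exact h⟩
    show (∑ j, A i j * x j) = ∑ j, A i' j * x j
    have key : ∀ k : Fin n, (∑ j, A k j * x j) =
        ∑ q : Quotient s, x q.out * ∑ j, (if r q.out j then A k j else 0) := by
      intro k
      rw [← Finset.sum_fiberwise Finset.univ (fun j => (Quotient.mk s j : Quotient s))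
        (fun j => A k j * x j)]
      refine Finset.sum_congr rfl fun q _ => ?_
      rw [Finset.mul_sum, Finset.sum_filter]
      refine Finset.sum_congr rfl fun j _ => ?_
      have hiff : (Quotient.mk s j : Quotient s) = q ↔ r q.out j := by
        constructor
        · intro hq
          have : (Quotient.mk s j : Quotient s) = Quotient.mk s q.out := by
            rw [hq, Quotient.out_eq]
          exact hr.symm (Quotient.exact this)
        · intro hj
          have : (Quotient.mk s q.out : Quotient s) = Quotient.mk s j := Quotient.sound hj
          rw [← this, Quotient.out_eq]
      by_cases hq : (Quotient.mk s j : Quotient s) = q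
      · rw [if_pos hq, if_pos (hiff.mp hq), ← hx q.out j (hiff.mp hq)]
        ring
      · rw [if_neg hq, if_neg (fun hj => hq (hiff.mpr hj))]
        ring
    rw [key i, key i']
    refine Finset.sum_congr rfl fun q _ => ?_
    rw [h i i' hii q.out]
end

section
/- Let A be an n×n real matrix and ∼ an equivalence relation on Fin n such that the polydiagonal Δ_∼ is A-invariant. Let k be the number of equivalence classes, choose representatives r_1, …, r_k, and define the k×k matrix B by B(s,t) = ∑_{j ∈ C_t} A(r_s, j), where C_t is the t-th class. Then for every x ∈ R^k, the vector x̂ ∈ R^n defined by x̂_i = x_{class(i)} satisfies (A x̂)_i = (B x)_{class(i)}; i.e., the restriction of A to Δ_∼ is conjugate, via the natural isomorphism R^k ≅ Δ_∼, to the quotient matrix B. -/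
theorem stmt4 (n k : ℕ) (A : Matrix (Fin n) (Fin n) ℝ)
    (cl : Fin n → Fin k) (rep : Fin k → Fin n)
    (hsec : ∀ t, cl (rep t) = t)
    (hinv : ∀ i i', cl i = cl i' → ∀ t : Fin k,
      ∑ j, (if cl j = t then A i j else 0) = ∑ j, (if cl j = t then A i' j else 0))
    (B : Matrix (Fin k) (Fin k) ℝ)
    (hB : ∀ s t, B s t = ∑ j, (if cl j = t then A (rep s) j else 0)) :
    ∀ x : Fin k → ℝ, ∀ i : Fin n,
      A.mulVec (fun i' => x (cl i')) i = B.mulVec x (cl i) := by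
  intro x i
  simp only [Matrix.mulVec, dotProduct]
  calc ∑ j, A i j * x (cl j)
      = ∑ j, ∑ t, (if cl j = t then A i j else 0) * x t := by
        refine Finset.sum_congr rfl fun j _ => ?_
        rw [Finset.sum_eq_single (cl j)] <;> simp +contextual [eq_comm]
    _ = ∑ t, (∑ j, (if cl j = t then A i j else 0)) * x t := by
        rw [Finset.sum_comm]; simp [Finset.sum_mul]
    _ = ∑ t, B (cl i) t * x t := by
        refine Finset.sum_congr rfl fun t _ => ?_
        rw [hB, hinv i (rep (cl i)) (by rw [hsec])]
end

section
/- Let A be an n×n real matrix, ∼ an equivalence relation on Fin n with A-invariant polydiagonal Δ_∼, and let B be the k×k quotient matrix (k = number of classes, B(s,t) = ∑_{j ∈ C_t} A(r_s, j) for a representative r_s of class C_s). Then every eigenvalue of B is an eigenvalue of A. -/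
theorem stmt11 (n k : ℕ) (A : Matrix (Fin n) (Fin n) ℝ)
    (cl : Fin n → Fin k) (rep : Fin k → Fin n)
    (hsec : ∀ t, cl (rep t) = t)
    (hinv : ∀ i i', cl i = cl i' → ∀ t : Fin k,
      ∑ j, (if cl j = t then A i j else 0) = ∑ j, (if cl j = t then A i' j else 0))
    (B : Matrix (Fin k) (Fin k) ℝ)
    (hB : ∀ s t, B s t = ∑ j, (if cl j = t then A (rep s) j else 0)) :
    ∀ μ : ℝ, Module.End.HasEigenvalue B.mulVecLin μ →
      Module.End.HasEigenvalue A.mulVecLin μ := by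
  intro μ hμ
  obtain ⟨x, hx⟩ := hμ.exists_hasEigenvector
  have hxe : B.mulVec x = μ • x := hx.apply_eq_smul
  set y : Fin n → ℝ := fun i => x (cl i) with hy
  have key : A.mulVec y = μ • y := by
    funext i
    have h1 : (A.mulVec y) i = ∑ t, (∑ j, if cl j = t then A i j else 0) * x t := by
      simp only [Matrix.mulVec, dotProduct, hy, Finset.sum_mul]
      rw [Finset.sum_comm]
      apply Finset.sum_congr rfl
      intro j _
      simp [ite_mul, Finset.sum_ite_eq]
    have h2 : ∀ t, (∑ j, if cl j = t then A i j else 0) = B (cl i) t := by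
      intro t
      rw [hB, hinv i (rep (cl i)) (hsec (cl i)).symm]
    rw [h1]
    simp only [h2]
    have : ∑ t, B (cl i) t * x t = (B.mulVec x) (cl i) := rfl
    rw [this, hxe]
    simp [hy]
  have hy0 : y ≠ 0 := by
    intro h
    apply hx.right
    funext t
    have := congrFun h (rep t)
    simpa [hy, hsec] using this
  exact Module.End.hasEigenvalue_of_hasEigenvector ⟨by
    rw [Module.End.mem_eigenspace_iff]; exact key, hy0⟩
end

section
/- Let σ be a permutation of Fin n that is a symmetry of the n×n real matrix A, i.e., A(σ(i), σ(j)) = A(i,j) for all i, j. If the polydiagonal Δ_∼ of an equivalence relation ∼ is A-invariant, then so is the polydiagonal of the conjugated relation ∼^σ defined by i ∼^σ j iff σ⁻¹(i) ∼ σ⁻¹(j). -/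
theorem stmt17 (n : ℕ) (A : Matrix (Fin n) (Fin n) ℝ)
    (σ : Equiv.Perm (Fin n)) (hsym : ∀ i j, A (σ i) (σ j) = A i j)
    (r : Fin n → Fin n → Prop) (hr : Equivalence r)
    (hinv : ∀ x : Fin n → ℝ, (∀ i j, r i j → x i = x j) →
      ∀ i j, r i j → A.mulVec x i = A.mulVec x j) :
    ∀ x : Fin n → ℝ, (∀ i j, r (σ.symm i) (σ.symm j) → x i = x j) →
      ∀ i j, r (σ.symm i) (σ.symm j) → A.mulVec x i = A.mulVec x j := by
  intro x hx i j hij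
  have key : ∀ k, A.mulVec x k = A.mulVec (fun m => x (σ m)) (σ.symm k) := by
    intro k
    simp only [Matrix.mulVec, dotProduct]
    rw [← Equiv.sum_comp σ.symm (fun m => A (σ.symm k) m * x (σ m))]
    apply Finset.sum_congr rfl
    intro m _
    have : A (σ.symm k) (σ.symm m) = A k m := by
      have := hsym (σ.symm k) (σ.symm m); simpa using this.symm
    rw [this, Equiv.apply_symm_apply]
  rw [key i, key j]
  exact hinv (fun m => x (σ m)) (fun a b hab => hx (σ a) (σ b) (by simpa using hab)) _ _ hij
end
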